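/- Let A be a unital associative k-algebra with a double Poisson bracket {{-,-}}, and d a positive integer. Let O(A,d) be the commutative algebra generated by symbols a_{ij} (a ∈ A, 1 ≤ i,j ≤ d, linear in a) with relations (ab)_{ij} = Σ_r a_{ir} b_{rj} and 1_{ij} = δ_{ij}. Then the formula {a_{ij}, b_{kl}} := {{a,b}}'_{kj} {{a,b}}''_{il} (Sweedler notation {{a,b}} = {{a,b}}' ⊗ {{a,b}}'') defines a well-defined Poisson bracket on O(A,d), i.e. a skew-symmetric biderivation satisfying the Jacobi identity. -/

import Mathlib

/-!
A biderivation of the polynomial ring on the symbols `a_{ij}` is determined by its values on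
pairs of symbols; prescribing `{a_{ij}, b_{pq}} = {{a,b}}'_{pj} {{a,b}}''_{iq}` gives one, and it
is skew-symmetric because `{{-,-}}` is. The Leibniz rule for `{{-,-}}` makes each Hamiltonian
derivation `{a_{ij}, -}` kill the defining relations of `O(A,d)`, so by skew-symmetry the bracket
descends to `O(A,d)`. For a skew-symmetric biderivation the Jacobiator is a derivation in each
argument, so the Jacobi identity only has to be checked on generators. There, after rewriting
`(1 ⊗ {{a, -}}) {{b, c}}` through `{{a, -}}_L` by skew-symmetry, the Jacobiator of
`a_{ij}, b_{ml}, c_{pq}` is a contraction of the double Jacobi identity for `(a, b, c)` minus one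
for `(a, c, b)`.
-/

open TensorProduct

set_option maxHeartbeats 1000000
set_option synthInstance.maxHeartbeats 200000

noncomputable section

/-- The defining relations of the coordinate ring `O(A,d)` of the `d`-th representation
space, as a subset of the free commutative algebra on symbols `a_{ij}`:
linearity of `a ↦ a_{ij}`, the relations `(ab)_{ij} = Σ_r a_{ir} b_{rj}`,
and `1_{ij} = δ_{ij}`. -/
def repRelSet (k A : Type*) [Field k] [Ring A] [Algebra k A] (d : ℕ) :
    Set (MvPolynomial (A × Fin d × Fin d) k) :=
  (⋃ (a : A) (b : A) (i : Fin d) (j : Fin d),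
    {MvPolynomial.X (a + b, i, j) - MvPolynomial.X (a, i, j) - MvPolynomial.X (b, i, j)}) ∪
  (⋃ (c : k) (a : A) (i : Fin d) (j : Fin d),
    {MvPolynomial.X (c • a, i, j) - MvPolynomial.C c * MvPolynomial.X (a, i, j)}) ∪
  (⋃ (a : A) (b : A) (i : Fin d) (j : Fin d),
    {MvPolynomial.X (a * b, i, j)
      - ∑ r : Fin d, MvPolynomial.X (a, i, r) * MvPolynomial.X (b, r, j)}) ∪
  (⋃ (i : Fin d) (j : Fin d),
    {MvPolynomial.X ((1 : A), i, j) - if i = j then 1 else 0})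

/-- The coordinate ring `O(A,d)` of the `d`-th representation space of `A`. -/
def RepCoordRing (k A : Type*) [Field k] [Ring A] [Algebra k A] (d : ℕ) :=
  MvPolynomial (A × Fin d × Fin d) k ⧸ Ideal.span (repRelSet k A d)

instance (k A : Type*) [Field k] [Ring A] [Algebra k A] (d : ℕ) :
    CommRing (RepCoordRing k A d) :=
  Ideal.Quotient.commRing _

instance (k A : Type*) [Field k] [Ring A] [Algebra k A] (d : ℕ) :
    Algebra k (RepCoordRing k A d) :=
  Ideal.Quotient.algebra k

/-- The generator `a_{ij}` of `O(A,d)`, as a linear function of `a ∈ A`. -/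
def repGen (k A : Type*) [Field k] [Ring A] [Algebra k A] (d : ℕ) (i j : Fin d) :
    A →ₗ[k] RepCoordRing k A d where
  toFun a := Ideal.Quotient.mk (Ideal.span (repRelSet k A d)) (MvPolynomial.X (a, i, j))
  map_add' a b := by
    show Ideal.Quotient.mk (Ideal.span (repRelSet k A d)) (MvPolynomial.X (a + b, i, j)) =
      Ideal.Quotient.mk (Ideal.span (repRelSet k A d)) (MvPolynomial.X (a, i, j)) + Ideal.Quotient.mk (Ideal.span (repRelSet k A d)) (MvPolynomial.X (b, i, j))
    rw [← map_add (Ideal.Quotient.mk (Ideal.span (repRelSet k A d)))]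
    refine (Ideal.Quotient.eq).2 (Ideal.subset_span ?_)
    simp only [repRelSet, Set.mem_union, Set.mem_iUnion, Set.mem_singleton_iff]
    exact Or.inl (Or.inl (Or.inl ⟨a, b, i, j, by ring⟩))
  map_smul' c a := by
    dsimp only [RingHom.id_apply]
    rw [← Ideal.Quotient.mkₐ_eq_mk k (Ideal.span (repRelSet k A d))]
    show Ideal.Quotient.mkₐ k (Ideal.span (repRelSet k A d)) (MvPolynomial.X (c • a, i, j)) = c • Ideal.Quotient.mkₐ k (Ideal.span (repRelSet k A d)) (MvPolynomial.X (a, i, j))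
    rw [← map_smul (Ideal.Quotient.mkₐ k (Ideal.span (repRelSet k A d))),
      Ideal.Quotient.mkₐ_eq_mk]
    refine (Ideal.Quotient.eq).2 (Ideal.subset_span ?_)
    simp only [repRelSet, Set.mem_union, Set.mem_iUnion, Set.mem_singleton_iff,
      MvPolynomial.smul_eq_C_mul]
    exact Or.inl (Or.inl (Or.inr ⟨c, a, i, j, rfl⟩))

/-- The linear map `A ⊗ A → O(A,d)` sending `u ⊗ v` to `u_{pq} · v_{rs}`, used to express
the Sweedler components of a double bracket. -/
def repPair (k A : Type*) [Field k] [Ring A] [Algebra k A] (d : ℕ) (p q r s : Fin d) :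
    A ⊗[k] A →ₗ[k] RepCoordRing k A d :=
  TensorProduct.lift (LinearMap.mk₂ k
    (fun u v => repGen k A d p q u * repGen k A d r s v)
    (fun u u' v => by simp [map_add, add_mul])
    (fun c u v => by simp [map_smul, smul_mul_assoc])
    (fun u v v' => by simp [map_add, mul_add])
    (fun c u v => by simp [map_smul, mul_smul_comm]))

/-- The cyclic permutation `(123)` on a triple tensor product, `x ⊗ y ⊗ z ↦ z ⊗ x ⊗ y`. -/
def cyclicPerm (k V : Type*) [CommRing k] [AddCommGroup V] [Module k V] :
    V ⊗[k] (V ⊗[k] V) →ₗ[k] V ⊗[k] (V ⊗[k] V) :=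
  (TensorProduct.comm k (V ⊗[k] V) V).toLinearMap ∘ₗ
    (TensorProduct.assoc k V V V).symm.toLinearMap

/-- For a double bracket `D` and `a : A`, the map `{{a, -}}_L : A ⊗ A → A ⊗ A ⊗ A`. -/
def bracketLeft (k A : Type*) [CommRing k] [Ring A] [Algebra k A]
    (D : A →ₗ[k] A →ₗ[k] A ⊗[k] A) (a : A) :
    A ⊗[k] A →ₗ[k] A ⊗[k] (A ⊗[k] A) :=
  (TensorProduct.assoc k A A A).toLinearMap ∘ₗ LinearMap.rTensor A (D a)

section Jacobiator

variable {k R : Type*} [CommRing k] [CommRing R] [Algebra k R] (B : R →ₗ[k] R →ₗ[k] R)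

def jacobiator (x y z : R) : R := B x (B y z) + B y (B z x) + B z (B x y)

lemma jacobiator_cyclic (x y z : R) : jacobiator B x y z = jacobiator B y z x := by
  unfold jacobiator; ring

variable {B}

lemma map_mul_left_of_skew (hskew : ∀ x y, B x y = -B y x)
    (hmul : ∀ x y z, B x (y * z) = B x y * z + y * B x z) (x y z : R) :
    B (x * y) z = B x z * y + x * B y z := by
  rw [hskew, hmul, hskew z x, hskew z y]; ring

variable (B) in
def jacobiatorDerivation (hskew : ∀ x y, B x y = -B y x)
    (hmul : ∀ x y z, B x (y * z) = B x y * z + y * B x z) (y z : R) : Derivation k R R :=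
  Derivation.mk' (B.flip (B y z) + B y ∘ₗ B z + B z ∘ₗ B.flip y) fun u v => by
    have hmul' := map_mul_left_of_skew hskew hmul
    simp only [LinearMap.add_apply, LinearMap.flip_apply, LinearMap.comp_apply, smul_eq_mul,
      hmul, hmul', map_add]
    linear_combination B z v * hskew u y + B z u * hskew v y

lemma jacobiator_eq_zero_of_adjoin_eq_top (hskew : ∀ x y, B x y = -B y x)
    (hmul : ∀ x y z, B x (y * z) = B x y * z + y * B x z) {s : Set R}
    (hs : Algebra.adjoin k s = ⊤) (hgen : ∀ x ∈ s, ∀ y ∈ s, ∀ z ∈ s, jacobiator B x y z = 0)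
    (x y z : R) : jacobiator B x y z = 0 := by
  have extend : ∀ y z, (∀ x ∈ s, jacobiator B x y z = 0) → ∀ x, jacobiator B x y z = 0 :=
    fun y z h x => congrArg (· x) <|
      Derivation.ext_of_adjoin_eq_top (D1 := jacobiatorDerivation B hskew hmul y z) (D2 := 0)
        s hs h
  have h₁ : ∀ x, ∀ y ∈ s, ∀ z ∈ s, jacobiator B x y z = 0 :=
    fun x y hy z hz => extend y z (fun x hx => hgen x hx y hy z hz) x
  have h₂ : ∀ x y, ∀ z ∈ s, jacobiator B x y z = 0 := fun x y z hz => by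
    rw [jacobiator_cyclic]
    exact extend z x (fun w hw => by rw [← jacobiator_cyclic]; exact h₁ x w hw z hz) y
  rw [jacobiator_cyclic, jacobiator_cyclic]
  exact extend x y (fun w hw => by rw [jacobiator_cyclic]; exact h₂ x y w hw) z

end Jacobiator

namespace Derivation

variable {k P M : Type*} [CommRing k] [CommRing P] [Algebra k P] [AddCommGroup M] [Module P M]
  [Module k M]

def applyₗ [IsScalarTower k P M] (a : P) : Derivation k P M →ₗ[P] M where
  toFun D := D a
  map_add' _ _ := rfl
  map_smul' _ _ := rfl

lemma map_eq_zero_of_mem_span (D : Derivation k P M) {s : Set P}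
    (hM : Ideal.span s ≤ Module.annihilator P M) (hs : ∀ r ∈ s, D r = 0) {x : P}
    (hx : x ∈ Ideal.span s) : D x = 0 := by
  induction hx using Submodule.span_induction with
  | mem r hr => exact hs r hr
  | zero => exact D.map_zero
  | add x y _ _ hx hy => rw [D.map_add, hx, hy, add_zero]
  | smul c x hxs hx =>
    rw [smul_eq_mul, D.leibniz, hx, smul_zero, Module.mem_annihilator.mp (hM hxs), zero_add]

end Derivation

namespace MvPolynomial

variable {σ k R : Type*} [CommRing k] [CommRing R] [Algebra k R]
  [Algebra (MvPolynomial σ k) R] [IsScalarTower k (MvPolynomial σ k) R]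

variable (k) in
def mkBiderivation (v : σ → σ → R) :
    Derivation k (MvPolynomial σ k) (Derivation k (MvPolynomial σ k) R) :=
  mkDerivation k fun g => mkDerivation k (v g)

variable (v : σ → σ → R)

@[simp]
lemma mkBiderivation_X (g : σ) : mkBiderivation k v (X g) = mkDerivation k (v g) :=
  mkDerivation_X _ _ _

lemma mkBiderivation_apply_X (x : MvPolynomial σ k) (h : σ) :
    mkBiderivation k v x (X h) = mkDerivation k (fun g => v g h) x := by
  change (Derivation.applyₗ (X h)).compDer (mkBiderivation k v) x = _
  congr 1
  exact derivation_ext fun g => by simp [Derivation.applyₗ]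

lemma mkBiderivation_X_X (g h : σ) : mkBiderivation k v (X g) (X h) = v g h := by simp

lemma mkBiderivation_skew (hv : ∀ g h, v g h = -v h g) (x y : MvPolynomial σ k) :
    mkBiderivation k v x y = -mkBiderivation k v y x := by
  -- both sides are derivations in `y`, and for `y = X h` both are derivations in `x`
  change mkBiderivation k v x y = (-(Derivation.applyₗ x).compDer (mkBiderivation k v)) y
  congr 1
  refine derivation_ext fun h => ?_
  change _ = -mkBiderivation k v (X h) x
  rw [mkBiderivation_apply_X, mkBiderivation_X, ← Derivation.neg_apply]
  congr 1
  exact derivation_ext fun g => by simp [hv g h]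

lemma mkBiderivation_eq_zero_of_mem_span {s : Set (MvPolynomial σ k)}
    (hR : Ideal.span s ≤ Module.annihilator (MvPolynomial σ k) R)
    (hv : ∀ g, ∀ r ∈ s, mkDerivation k (v g) r = 0) (x : MvPolynomial σ k)
    {y : MvPolynomial σ k} (hy : y ∈ Ideal.span s) : mkBiderivation k v x y = 0 := by
  refine (mkBiderivation k v x).map_eq_zero_of_mem_span hR (fun r hr => ?_) hy
  change (Derivation.applyₗ r).compDer (mkBiderivation k v) x = 0
  have : (Derivation.applyₗ r).compDer (mkBiderivation k v) = 0 :=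
    derivation_ext fun g => by simp [Derivation.applyₗ, hv g r hr]
  rw [this, Derivation.zero_apply]

section Quotient

variable {s : Set (MvPolynomial σ k)} (w : σ → σ → MvPolynomial σ k ⧸ Ideal.span s)

variable (k s) in
def quotientBracket (hw : ∀ g h, w g h = -w h g)
    (hrel : ∀ g, ∀ r ∈ s, mkDerivation k (w g) r = 0) :
    (MvPolynomial σ k ⧸ Ideal.span s) →ₗ[k] (MvPolynomial σ k ⧸ Ideal.span s) →ₗ[k]
      (MvPolynomial σ k ⧸ Ideal.span s) :=
  let I := (Ideal.span s).restrictScalars k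
  let e := (Submodule.Quotient.restrictScalarsEquiv k (Ideal.span s)).symm.toLinearMap
  let B := LinearMap.mk₂ k (fun x y => mkBiderivation k w x y)
    (fun _ _ _ => by rw [Derivation.map_add, Derivation.add_apply])
    (fun _ _ _ => by rw [Derivation.map_smul, Derivation.smul_apply])
    (fun _ _ _ => Derivation.map_add _ _ _) (fun _ _ _ => Derivation.map_smul _ _ _)
  have right : I ≤ LinearMap.ker B.flip := fun y hy => LinearMap.ext fun x =>
    mkBiderivation_eq_zero_of_mem_span w Ideal.annihilator_quotient.ge hrel x hy
  have left : I ≤ LinearMap.ker B := fun x hx => LinearMap.ext fun y => by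
    simpa [B, mkBiderivation_skew w hw x y] using
      mkBiderivation_eq_zero_of_mem_span w Ideal.annihilator_quotient.ge hrel y hx
  (B.liftQ₂ I I left right).compl₁₂ e e

variable (hw : ∀ g h, w g h = -w h g) (hrel : ∀ g, ∀ r ∈ s, mkDerivation k (w g) r = 0)

lemma quotientBracket_mk_mk (x y : MvPolynomial σ k) :
    quotientBracket k s w hw hrel (Ideal.Quotient.mk _ x) (Ideal.Quotient.mk _ y) =
      mkBiderivation k w x y :=
  rfl

lemma quotientBracket_mk_X_mk_X (g h : σ) :
    quotientBracket k s w hw hrel (Ideal.Quotient.mk _ (X g)) (Ideal.Quotient.mk _ (X h)) =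
      w g h := by
  rw [quotientBracket_mk_mk, mkBiderivation_X_X]

lemma quotientBracket_skew (x y : MvPolynomial σ k ⧸ Ideal.span s) :
    quotientBracket k s w hw hrel x y = -quotientBracket k s w hw hrel y x := by
  obtain ⟨x, rfl⟩ := Ideal.Quotient.mk_surjective x
  obtain ⟨y, rfl⟩ := Ideal.Quotient.mk_surjective y
  simp only [quotientBracket_mk_mk, mkBiderivation_skew w hw x y]

lemma quotientBracket_mul_right (x y z : MvPolynomial σ k ⧸ Ideal.span s) :
    quotientBracket k s w hw hrel x (y * z) =
      quotientBracket k s w hw hrel x y * z + y * quotientBracket k s w hw hrel x z := by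
  obtain ⟨x, rfl⟩ := Ideal.Quotient.mk_surjective x
  obtain ⟨y, rfl⟩ := Ideal.Quotient.mk_surjective y
  obtain ⟨z, rfl⟩ := Ideal.Quotient.mk_surjective z
  rw [← map_mul, quotientBracket_mk_mk, Derivation.leibniz, quotientBracket_mk_mk,
    quotientBracket_mk_mk]
  simp only [Algebra.smul_def, Ideal.Quotient.algebraMap_eq]
  ring

variable (k) in
lemma adjoin_range_mk_X (I : Ideal (MvPolynomial σ k)) :
    Algebra.adjoin k (Set.range fun g => Ideal.Quotient.mk I (X g)) = ⊤ := by
  have : (Set.range fun g => Ideal.Quotient.mk I (X g)) =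
      Ideal.Quotient.mkₐ k I '' Set.range X := by
    rw [← Set.range_comp]; rfl
  rw [this, Algebra.adjoin_image, adjoin_range_X, Algebra.map_top, AlgHom.range_eq_top]
  exact Ideal.Quotient.mkₐ_surjective k I

end Quotient

end MvPolynomial

section RepresentationSpace

variable {k A : Type*} [Field k] [Ring A] [Algebra k A] {d : ℕ}

instance : Algebra (MvPolynomial (A × Fin d × Fin d) k) (RepCoordRing k A d) :=
  Ideal.Quotient.algebra _

instance : IsScalarTower k (MvPolynomial (A × Fin d × Fin d) k) (RepCoordRing k A d) :=
  Ideal.Quotient.isScalarTower _ _ _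

lemma algebraMap_X_eq_repGen (a : A) (i j : Fin d) :
    algebraMap _ (RepCoordRing k A d) (MvPolynomial.X (a, i, j) : MvPolynomial _ k) =
      repGen k A d i j a :=
  rfl

lemma algebraMap_eq_of_sub_mem_repRelSet {x y : MvPolynomial (A × Fin d × Fin d) k}
    (h : x - y ∈ repRelSet k A d) :
    algebraMap _ (RepCoordRing k A d) x = algebraMap _ (RepCoordRing k A d) y :=
  Ideal.Quotient.eq.2 (Ideal.subset_span h)

lemma repGen_mul (i j : Fin d) (a b : A) :
    repGen k A d i j (a * b) = ∑ r : Fin d, repGen k A d i r a * repGen k A d r j b := by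
  rw [← algebraMap_X_eq_repGen, algebraMap_eq_of_sub_mem_repRelSet (y := ∑ r : Fin d,
    MvPolynomial.X (a, i, r) * MvPolynomial.X (b, r, j))]
  · simp only [map_sum, map_mul, algebraMap_X_eq_repGen]
  simp only [repRelSet, Set.mem_union, Set.mem_iUnion, Set.mem_singleton_iff]
  exact Or.inl (Or.inr ⟨a, b, i, j, rfl⟩)

lemma repGen_one (i j : Fin d) : repGen k A d i j 1 = if i = j then 1 else 0 := by
  rw [← algebraMap_X_eq_repGen,
    algebraMap_eq_of_sub_mem_repRelSet (y := if i = j then 1 else 0)]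
  · split_ifs <;> simp
  simp only [repRelSet, Set.mem_union, Set.mem_iUnion, Set.mem_singleton_iff]
  exact Or.inr ⟨i, j, rfl⟩

lemma repPair_tmul (p q r s : Fin d) (u v : A) :
    repPair k A d p q r s (u ⊗ₜ v) = repGen k A d p q u * repGen k A d r s v :=
  rfl

lemma repPair_comm (p q r s : Fin d) (T : A ⊗[k] A) :
    repPair k A d p q r s (TensorProduct.comm k A A T) = repPair k A d r s p q T := by
  induction T with
  | zero => simp
  | tmul u v => simp [repPair_tmul, mul_comm]
  | add x y hx hy => simp [map_add, hx, hy]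

lemma repPair_lTensor_mulRight (p q r s : Fin d) (b : A) (T : A ⊗[k] A) :
    repPair k A d p q r s (LinearMap.lTensor A (LinearMap.mulRight k b) T)
      = ∑ m : Fin d, repPair k A d p q r m T * repGen k A d m s b := by
  induction T with
  | zero => simp
  | add x y hx hy => simp [map_add, hx, hy, Finset.sum_add_distrib, add_mul]
  | tmul x y =>
    rw [LinearMap.lTensor_tmul, repPair_tmul, LinearMap.mulRight_apply, repGen_mul]
    exact (Finset.mul_sum _ _ _).trans
      (Finset.sum_congr rfl fun m _ => by simp only [repPair_tmul]; ring)

lemma repPair_rTensor_mulLeft (p q r s : Fin d) (a : A) (T : A ⊗[k] A) :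
    repPair k A d p q r s (LinearMap.rTensor A (LinearMap.mulLeft k a) T)
      = ∑ m : Fin d, repGen k A d p m a * repPair k A d m q r s T := by
  induction T with
  | zero => simp
  | add x y hx hy => simp [map_add, hx, hy, Finset.sum_add_distrib, mul_add]
  | tmul x y =>
    rw [LinearMap.rTensor_tmul, repPair_tmul, LinearMap.mulLeft_apply, repGen_mul]
    exact (Finset.sum_mul _ _ _).trans
      (Finset.sum_congr rfl fun m _ => by simp only [repPair_tmul]; ring)

variable (D : A →ₗ[k] A →ₗ[k] A ⊗[k] A)
  (hskew : ∀ a b : A, D a b = - (TensorProduct.comm k A A) (D b a))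
  (hleib : ∀ a b c : A, D a (b * c)
    = LinearMap.lTensor A (LinearMap.mulRight k c) (D a b)
      + LinearMap.rTensor A (LinearMap.mulLeft k b) (D a c))
  (hjac : ∀ a b c : A, bracketLeft k A D a (D b c)
    + cyclicPerm k A (bracketLeft k A D b (D c a))
    + cyclicPerm k A (cyclicPerm k A (bracketLeft k A D c (D a b))) = 0)

include hleib in
lemma apply_one_eq_zero_of_leibniz (a : A) : D a 1 = 0 := by
  have h := hleib a 1 1
  rwa [mul_one, LinearMap.mulRight_one, LinearMap.mulLeft_one, LinearMap.lTensor_id,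
    LinearMap.rTensor_id, LinearMap.id_apply, left_eq_add] at h

/-- For `g = (a, i, j)`, `h = (b, p, q)`: `{a_{ij}, b_{pq}} = {{a,b}}'_{pj} {{a,b}}''_{iq}`. -/
def genBracket (g h : A × Fin d × Fin d) : RepCoordRing k A d :=
  repPair k A d h.2.1 g.2.2 g.2.1 h.2.2 (D g.1 h.1)

include hskew in
lemma genBracket_skew (g h : A × Fin d × Fin d) : genBracket D g h = -genBracket D h g := by
  rw [genBracket, hskew, map_neg, repPair_comm]
  rfl

include hleib in
lemma mkDerivation_genBracket_eq_zero (g : A × Fin d × Fin d)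
    {r : MvPolynomial (A × Fin d × Fin d) k} (hr : r ∈ repRelSet k A d) :
    MvPolynomial.mkDerivation k (genBracket D g) r = 0 := by
  obtain ⟨u, s, t⟩ := g
  simp only [repRelSet, Set.mem_union, Set.mem_iUnion, Set.mem_singleton_iff] at hr
  rcases hr with
    (((⟨a, b, i, j, rfl⟩ | ⟨c, a, i, j, rfl⟩) | ⟨a, b, i, j, rfl⟩) | ⟨i, j, rfl⟩)
  · simp [genBracket]
  · simp [genBracket, MvPolynomial.C_mul']
  · simp only [map_sub, map_sum, Derivation.leibniz, MvPolynomial.mkDerivation_X,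
      Algebra.smul_def, algebraMap_X_eq_repGen]
    rw [sub_eq_zero, genBracket, hleib, map_add, repPair_lTensor_mulRight,
      repPair_rTensor_mulLeft, Finset.sum_add_distrib, add_comm]
    simp only [genBracket, mul_comm]
  · split_ifs <;> simp [genBracket, apply_one_eq_zero_of_leibniz D hleib]

def repTriple (α β γ : Fin d × Fin d) : A ⊗[k] (A ⊗[k] A) →ₗ[k] RepCoordRing k A d :=
  TensorProduct.lift (LinearMap.mk₂ k
    (fun u t => repGen k A d α.1 α.2 u * repPair k A d β.1 β.2 γ.1 γ.2 t)
    (fun u u' t => by simp only [map_add, add_mul])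
    (fun c u t => by simp only [map_smul, smul_mul_assoc])
    (fun u t t' => by simp only [map_add, mul_add])
    (fun c u t => by simp only [map_smul, mul_smul_comm]))

lemma repTriple_tmul (α β γ : Fin d × Fin d) (u : A) (t : A ⊗[k] A) :
    repTriple α β γ (u ⊗ₜ t) =
      repGen k A d α.1 α.2 u * repPair k A d β.1 β.2 γ.1 γ.2 t :=
  rfl

lemma repTriple_assoc_tmul (α β γ : Fin d × Fin d) (T : A ⊗[k] A) (v : A) :
    repTriple α β γ (TensorProduct.assoc k A A A (T ⊗ₜ v))
      = repPair k A d α.1 α.2 β.1 β.2 T * repGen k A d γ.1 γ.2 v := by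
  induction T with
  | zero => simp
  | add x y hx hy => rw [add_tmul, map_add, map_add, map_add, hx, hy, add_mul]
  | tmul x y =>
    rw [assoc_tmul, repTriple_tmul, repPair_tmul, repPair_tmul]
    ring

lemma repTriple_cyclicPerm (α β γ : Fin d × Fin d) (t : A ⊗[k] (A ⊗[k] A)) :
    repTriple α β γ (cyclicPerm k A t) = repTriple β γ α t := by
  induction t with
  | zero => simp
  | add x y hx hy => simp only [map_add, hx, hy]
  | tmul u T =>
    induction T with
    | zero => simp
    | add x y hx hy => rw [tmul_add, map_add, map_add, map_add, hx, hy]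
    | tmul x y =>
      rw [cyclicPerm, LinearMap.comp_apply, LinearEquiv.coe_coe, LinearEquiv.coe_coe,
        assoc_symm_tmul, comm_tmul, repTriple_tmul, repTriple_tmul, repPair_tmul,
        repPair_tmul]
      ring

lemma cyclicPerm_assoc_tmul (T : A ⊗[k] A) (v : A) :
    cyclicPerm k A (TensorProduct.assoc k A A A (T ⊗ₜ v)) = v ⊗ₜ T := by
  induction T with
  | zero => simp
  | add x y hx hy => rw [add_tmul, map_add, map_add, hx, hy, tmul_add]
  | tmul x y => simp [cyclicPerm]

lemma bracketLeft_tmul (a x y : A) :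
    bracketLeft k A D a (x ⊗ₜ y) = TensorProduct.assoc k A A A (D a x ⊗ₜ y) :=
  rfl

lemma lTensor_comm_eq_cyclicPerm_bracketLeft (a : A) (T : A ⊗[k] A) :
    LinearMap.lTensor A (D a) (TensorProduct.comm k A A T)
      = cyclicPerm k A (bracketLeft k A D a T) := by
  induction T with
  | zero => simp
  | add x y hx hy => simp only [map_add, hx, hy]
  | tmul x y =>
    rw [comm_tmul, LinearMap.lTensor_tmul, bracketLeft_tmul, cyclicPerm_assoc_tmul]

include hskew in
lemma lTensor_apply_eq_neg_cyclicPerm_bracketLeft (a b c : A) :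
    LinearMap.lTensor A (D a) (D b c) = -cyclicPerm k A (bracketLeft k A D a (D c b)) := by
  rw [hskew b c, map_neg, lTensor_comm_eq_cyclicPerm_bracketLeft]

section Bracket

variable {D} {B : RepCoordRing k A d →ₗ[k] RepCoordRing k A d →ₗ[k] RepCoordRing k A d}
  (hmul : ∀ x y z, B x (y * z) = B x y * z + y * B x z)
  (hgen : ∀ (a b : A) (i j p q : Fin d),
    B (repGen k A d i j a) (repGen k A d p q b) = repPair k A d p j i q (D a b))
include hmul hgen

lemma apply_repGen_repPair (a : A) (i j p q r s : Fin d) (T : A ⊗[k] A) :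
    B (repGen k A d i j a) (repPair k A d p q r s T)
      = repTriple (p, j) (i, q) (r, s) (bracketLeft k A D a T)
        + repTriple (p, q) (r, j) (i, s) (LinearMap.lTensor A (D a) T) := by
  induction T with
  | zero => simp
  | add x y hx hy => simp only [map_add, hx, hy]; ring
  | tmul u v =>
    rw [repPair_tmul, hmul, hgen, hgen, bracketLeft_tmul, repTriple_assoc_tmul,
      LinearMap.lTensor_tmul, repTriple_tmul]

include hskew hjac in
lemma jacobiator_repGen (a b c : A) (i j m l p q : Fin d) :
    jacobiator B (repGen k A d i j a) (repGen k A d m l b) (repGen k A d p q c) = 0 := by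
  have habc := congrArg (repTriple (p, j) (i, l) (m, q)) (hjac a b c)
  have hacb := congrArg (repTriple (m, j) (i, q) (p, l)) (hjac a c b)
  simp only [map_add, map_zero, repTriple_cyclicPerm] at habc hacb
  rw [jacobiator, hgen b c, hgen c a, hgen a b, apply_repGen_repPair hmul hgen,
    apply_repGen_repPair hmul hgen, apply_repGen_repPair hmul hgen,
    lTensor_apply_eq_neg_cyclicPerm_bracketLeft D hskew a b c,
    lTensor_apply_eq_neg_cyclicPerm_bracketLeft D hskew b c a,
    lTensor_apply_eq_neg_cyclicPerm_bracketLeft D hskew c a b]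
  simp only [map_neg, repTriple_cyclicPerm]
  linear_combination habc - hacb

end Bracket

end RepresentationSpace

theorem van_den_bergh_poisson_bracket_general
    (k A : Type*) [Field k] [Ring A] [Algebra k A] (d : ℕ)
    (D : A →ₗ[k] A →ₗ[k] A ⊗[k] A)
    (hskew : ∀ a b : A, D a b = - (TensorProduct.comm k A A) (D b a))
    (hleib : ∀ a b c : A, D a (b * c)
      = LinearMap.lTensor A (LinearMap.mulRight k c) (D a b)
        + LinearMap.rTensor A (LinearMap.mulLeft k b) (D a c))
    (hjac : ∀ a b c : A, bracketLeft k A D a (D b c)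
        + cyclicPerm k A (bracketLeft k A D b (D c a))
        + cyclicPerm k A (cyclicPerm k A (bracketLeft k A D c (D a b))) = 0) :
    ∃ B : RepCoordRing k A d →ₗ[k] RepCoordRing k A d →ₗ[k] RepCoordRing k A d,
      (∀ x y, B x y = - B y x) ∧
      (∀ x y z, B x (y * z) = B x y * z + y * B x z) ∧
      (∀ x y z, B (x * y) z = B x z * y + x * B y z) ∧
      (∀ x y z, B x (B y z) + B y (B z x) + B z (B x y) = 0) ∧
      (∀ (a b : A) (i j p q : Fin d),
        B (repGen k A d i j a) (repGen k A d p q b) = repPair k A d p j i q (D a b)) := by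
  let B : RepCoordRing k A d →ₗ[k] RepCoordRing k A d →ₗ[k] RepCoordRing k A d :=
    MvPolynomial.quotientBracket k (repRelSet k A d) (genBracket D) (genBracket_skew D hskew)
      fun g _ hr => mkDerivation_genBracket_eq_zero D hleib g hr
  have hB_skew : ∀ x y, B x y = -B y x := MvPolynomial.quotientBracket_skew _ _ _
  have hB_mul : ∀ x y z, B x (y * z) = B x y * z + y * B x z :=
    MvPolynomial.quotientBracket_mul_right _ _ _
  have hB_gen : ∀ (a b : A) (i j p q : Fin d),
      B (repGen k A d i j a) (repGen k A d p q b) = repPair k A d p j i q (D a b) :=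
    fun a b i j p q => MvPolynomial.quotientBracket_mk_X_mk_X _ _ _ (a, i, j) (b, p, q)
  refine ⟨B, hB_skew, hB_mul, map_mul_left_of_skew hB_skew hB_mul, fun x y z =>
    jacobiator_eq_zero_of_adjoin_eq_top hB_skew hB_mul
      (MvPolynomial.adjoin_range_mk_X k (Ideal.span (repRelSet k A d))) ?_ x y z, hB_gen⟩
  rintro _ ⟨⟨a, i, j⟩, rfl⟩ _ ⟨⟨b, m, l⟩, rfl⟩ _ ⟨⟨c, p, q⟩, rfl⟩
  exact jacobiator_repGen hskew hjac hB_mul hB_gen a b c i j m l p q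

/-- Van den Bergh: a double Poisson bracket `{{-,-}}` on `A` induces a
Poisson bracket on `O(A,d)` via `{a_{ij}, b_{kl}} = {{a,b}}'_{kj} {{a,b}}''_{il}`. -/
theorem van_den_bergh_poisson_bracket
    (k A : Type*) [Field k] [CharZero k] [Ring A] [Algebra k A] (d : ℕ)
    (D : A →ₗ[k] A →ₗ[k] A ⊗[k] A)
    (hskew : ∀ a b : A, D a b = - (TensorProduct.comm k A A) (D b a))
    (hleib : ∀ a b c : A, D a (b * c)
      = LinearMap.lTensor A (LinearMap.mulRight k c) (D a b)
        + LinearMap.rTensor A (LinearMap.mulLeft k b) (D a c))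
    (hjac : ∀ a b c : A, bracketLeft k A D a (D b c)
        + cyclicPerm k A (bracketLeft k A D b (D c a))
        + cyclicPerm k A (cyclicPerm k A (bracketLeft k A D c (D a b))) = 0) :
    ∃ B : RepCoordRing k A d →ₗ[k] RepCoordRing k A d →ₗ[k] RepCoordRing k A d,
      (∀ x y, B x y = - B y x) ∧
      (∀ x y z, B x (y * z) = B x y * z + y * B x z) ∧
      (∀ x y z, B (x * y) z = B x z * y + x * B y z) ∧
      (∀ x y z, B x (B y z) + B y (B z x) + B z (B x y) = 0) ∧
      (∀ (a b : A) (i j p q : Fin d),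
        B (repGen k A d i j a) (repGen k A d p q b) = repPair k A d p j i q (D a b)) :=
  van_den_bergh_poisson_bracket_general k A d D hskew hleib hjac

end
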